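/- Let H1, H2 ∈ (0,1), let ε > 0, and let t, t', s, s' ≥ 0. Then (1/4)·( t^{2H1} + t'^{2H1} − |t − t'|^{2H1} + s^{2H2} + s'^{2H2} − |s − s'|^{2H2} )² < (ε + t^{2H1} + s^{2H2})·(ε + t'^{2H1} + s'^{2H2}). -/

import Mathlib

/-!
Write `R_H(t, t') = (t^{2H} + t'^{2H} - |t - t'|^{2H}) / 2`. Since `x ↦ x^H` is subadditive for
`H ∈ [0, 1]`, `|t^H - t'^H| ≤ |t - t'|^H ≤ t^H + t'^H`; squaring gives the Cauchy–Schwarz bound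
`|R_H(t, t')| ≤ t^H t'^H`. Adding the two kernels and applying Cauchy–Schwarz in `ℝ²` to
`(t^{H1}, s^{H2})` and `(t'^{H1}, s'^{H2})` bounds the left side by the product without `ε`,
and `ε > 0` makes the inequality strict.
-/

open Real

noncomputable def fbmCovariance (H t t' : ℝ) : ℝ :=
  (t ^ (2 * H) + t' ^ (2 * H) - |t - t'| ^ (2 * H)) / 2

lemma Real.rpow_two_mul {x : ℝ} (hx : 0 ≤ x) (p : ℝ) : x ^ (2 * p) = (x ^ p) ^ 2 := by
  rw [mul_comm, rpow_mul hx, rpow_two]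

lemma Real.abs_rpow_sub_rpow_le {x y p : ℝ} (hx : 0 ≤ x) (hy : 0 ≤ y) (hp0 : 0 ≤ p)
    (hp1 : p ≤ 1) : |x ^ p - y ^ p| ≤ |x - y| ^ p := by
  wlog hyx : y ≤ x generalizing x y
  · rw [abs_sub_comm, abs_sub_comm x]
    exact this hy hx (le_of_not_ge hyx)
  have hsub : 0 ≤ x - y := sub_nonneg.2 hyx
  have hsubadd : x ^ p ≤ (x - y) ^ p + y ^ p := by
    simpa using rpow_add_le_add_rpow hsub hy hp0 hp1
  have hmono : y ^ p ≤ x ^ p := rpow_le_rpow hy hyx hp0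
  rw [abs_of_nonneg (sub_nonneg.2 hmono), abs_of_nonneg hsub]
  linarith

lemma Real.abs_sub_rpow_le_rpow_add_rpow {x y p : ℝ} (hx : 0 ≤ x) (hy : 0 ≤ y) (hp : 0 ≤ p) :
    |x - y| ^ p ≤ x ^ p + y ^ p := by
  wlog hyx : y ≤ x generalizing x y
  · rw [abs_sub_comm, add_comm]
    exact this hy hx (le_of_not_ge hyx)
  rw [abs_of_nonneg (sub_nonneg.2 hyx)]
  have hmono : (x - y) ^ p ≤ x ^ p := rpow_le_rpow (sub_nonneg.2 hyx) (by linarith) hp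
  linarith [rpow_nonneg hy p]

lemma abs_fbmCovariance_le {H t t' : ℝ} (hH0 : 0 ≤ H) (hH1 : H ≤ 1) (ht : 0 ≤ t)
    (ht' : 0 ≤ t') : |fbmCovariance H t t'| ≤ t ^ H * t' ^ H := by
  have hlower : (t ^ H - t' ^ H) ^ 2 ≤ (|t - t'| ^ H) ^ 2 :=
    sq_le_sq.2 <| by
      simpa [abs_of_nonneg (rpow_nonneg (abs_nonneg (t - t')) H)] using
        abs_rpow_sub_rpow_le ht ht' hH0 hH1
  have hupper : (|t - t'| ^ H) ^ 2 ≤ (t ^ H + t' ^ H) ^ 2 :=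
    pow_le_pow_left₀ (rpow_nonneg (abs_nonneg _) H)
      (abs_sub_rpow_le_rpow_add_rpow ht ht' hH0) 2
  rw [fbmCovariance, rpow_two_mul ht, rpow_two_mul ht', rpow_two_mul (abs_nonneg _), abs_le]
  constructor <;> nlinarith

lemma sq_add_lt_of_abs_le_mul {r q a a' b b' ε : ℝ} (hr : |r| ≤ a * a') (hq : |q| ≤ b * b')
    (hε : 0 < ε) : (r + q) ^ 2 < (ε + a ^ 2 + b ^ 2) * (ε + a' ^ 2 + b' ^ 2) := by
  have hsum : |r + q| ≤ a * a' + b * b' := (abs_add_le r q).trans (add_le_add hr hq)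
  have hsq : (r + q) ^ 2 ≤ (a * a' + b * b') ^ 2 :=
    sq_le_sq' (by linarith [neg_abs_le (r + q)]) (le_trans (le_abs_self _) hsum)
  have hcs : (a * a' + b * b') ^ 2 ≤ (a ^ 2 + b ^ 2) * (a' ^ 2 + b' ^ 2) := by
    nlinarith [sq_nonneg (a * b' - a' * b)]
  nlinarith [sq_nonneg a, sq_nonneg a', sq_nonneg b, sq_nonneg b', mul_pos hε hε]

theorem covariance_bound_eps (H1 H2 : ℝ) (h1 : H1 ∈ Set.Ioo (0:ℝ) 1)
    (h2 : H2 ∈ Set.Ioo (0:ℝ) 1) (ε : ℝ) (hε : 0 < ε)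
    (t t' s s' : ℝ) (ht : 0 ≤ t) (ht' : 0 ≤ t') (hs : 0 ≤ s) (hs' : 0 ≤ s') :
    1/4 * (t ^ (2 * H1) + t' ^ (2 * H1) - |t - t'| ^ (2 * H1) +
            s ^ (2 * H2) + s' ^ (2 * H2) - |s - s'| ^ (2 * H2)) ^ 2 <
      (ε + t ^ (2 * H1) + s ^ (2 * H2)) * (ε + t' ^ (2 * H1) + s' ^ (2 * H2)) := by
  have hlhs : 1/4 * (t ^ (2 * H1) + t' ^ (2 * H1) - |t - t'| ^ (2 * H1) +
        s ^ (2 * H2) + s' ^ (2 * H2) - |s - s'| ^ (2 * H2)) ^ 2 =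
      (fbmCovariance H1 t t' + fbmCovariance H2 s s') ^ 2 := by
    simp only [fbmCovariance]
    ring
  rw [hlhs, rpow_two_mul ht, rpow_two_mul ht', rpow_two_mul hs, rpow_two_mul hs']
  exact sq_add_lt_of_abs_le_mul (abs_fbmCovariance_le h1.1.le h1.2.le ht ht')
    (abs_fbmCovariance_le h2.1.le h2.2.le hs hs') hε
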